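/- arXiv:2210.00354 — 2 statements merged into one kernel-verified Lean document; each statement's English description precedes it below -/
import Mathlib

section
/- Suppose Y ⊥ (X, X̃) | Z and X, X̃ are conditionally i.i.d. given Z. Then the conditional distribution of Y given (X, X̃, Z) equals the conditional distribution of Y given (X̃, X, Z); i.e., Y | (X, X̃, Z) =_d Y | (X̃, X, Z). -/
open MeasureTheory ProbabilityTheory Set Filter

section Aux

variable {Ω γ : Type*} {mΩ : MeasurableSpace Ω} [StandardBorelSpace Ω] [Nonempty Ω]
  [MeasurableSpace γ]

/-- Key computation: if `Y ⊥ W ∣ Z` then for measurable `B, t, u`,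
`μ (W⁻¹B ∩ Z⁻¹t ∩ Y⁻¹u) = ∫⁻_{W⁻¹B ∩ Z⁻¹t} condDistrib Y Z μ (Z ω) u dμ`. -/
lemma star2 {β : Type*} [MeasurableSpace β] (μ : Measure Ω) [IsProbabilityMeasure μ]
    (W : Ω → β) (Y : Ω → ℝ) (Z : Ω → γ)
    (hW : Measurable W) (hY : Measurable Y) (hZ : Measurable Z)
    (hCI : CondIndepFun (MeasurableSpace.comap Z inferInstance) hZ.comap_le Y W μ)
    {B : Set β} {t : Set γ} {u : Set ℝ}
    (hB : MeasurableSet B) (ht : MeasurableSet t) (hu : MeasurableSet u) :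
    μ (W ⁻¹' B ∩ Z ⁻¹' t ∩ Y ⁻¹' u)
      = ∫⁻ ω in W ⁻¹' B ∩ Z ⁻¹' t, condDistrib Y Z μ (Z ω) u ∂μ := by
  have hm : MeasurableSpace.comap Z inferInstance ≤ mΩ := hZ.comap_le
  set gu : Ω → ℝ := μ⟦Y ⁻¹' u | MeasurableSpace.comap Z inferInstance⟧ with hgu_def
  set fB : Ω → ℝ := μ⟦W ⁻¹' B | MeasurableSpace.comap Z inferInstance⟧ with hfB_def
  have hZt : MeasurableSet (Z ⁻¹' t) := hZ ht
  have hZt_m : MeasurableSet[MeasurableSpace.comap Z inferInstance] (Z ⁻¹' t) := ⟨t, ht, rfl⟩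
  have hWB : MeasurableSet (W ⁻¹' B) := hW hB
  have hYu : MeasurableSet (Y ⁻¹' u) := hY hu
  -- conditional independence
  have hCI' : (μ⟦Y ⁻¹' u ∩ W ⁻¹' B | MeasurableSpace.comap Z inferInstance⟧)
      =ᵐ[μ] fun ω => gu ω * fB ω :=
    (condIndepFun_iff_condExp_inter_preimage_eq_mul hY hW).mp hCI u B hu hB
  -- condDistrib vs condexp
  have hc : (fun ω => (condDistrib Y Z μ (Z ω) u).toReal) =ᵐ[μ] gu :=
    condDistrib_ae_eq_condExp hZ hY hu
  have hind_int : ∀ (s : Set Ω), MeasurableSet s →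
      Integrable (s.indicator fun _ => (1:ℝ)) μ :=
    fun s hs => (integrable_const _).indicator hs
  have hgu_nonneg : 0 ≤ᵐ[μ] gu :=
    condExp_nonneg (Eventually.of_forall fun ω =>
      Set.indicator_nonneg (fun _ _ => zero_le_one) ω)
  have hgu_le_one : gu ≤ᵐ[μ] fun _ => (1:ℝ) := by
    have h := condExp_mono (μ := μ) (m := MeasurableSpace.comap Z inferInstance)
      (hind_int _ hYu) (integrable_const (1:ℝ))
      (Eventually.of_forall fun ω =>
        Set.indicator_le_self' (fun _ _ => zero_le_one) ω)
    have hc1 : μ[(fun _ => (1:ℝ)) | MeasurableSpace.comap Z inferInstance] = fun _ => (1:ℝ) :=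
      condExp_const hm (1:ℝ)
    rwa [hc1] at h
  -- the conditional kernel values are at most 1
  have hc_le_one : ∀ ω, condDistrib Y Z μ (Z ω) u ≤ 1 := fun ω => prob_le_one
  have hc_meas : Measurable fun ω => condDistrib Y Z μ (Z ω) u :=
    (measurable_condDistrib (μ := μ) hu).mono hm le_rfl
  -- RHS is finite
  have hRHS_le : (∫⁻ ω in W ⁻¹' B ∩ Z ⁻¹' t, condDistrib Y Z μ (Z ω) u ∂μ)
      ≤ μ (W ⁻¹' B ∩ Z ⁻¹' t) := by
    refine (lintegral_mono fun ω => hc_le_one ω).trans ?_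
    simp
  have hRHS_ne_top : (∫⁻ ω in W ⁻¹' B ∩ Z ⁻¹' t, condDistrib Y Z μ (Z ω) u ∂μ) ≠ ⊤ :=
    (hRHS_le.trans_lt (measure_lt_top _ _)).ne
  -- compute toReal of RHS
  have hRHS_toReal : (∫⁻ ω in W ⁻¹' B ∩ Z ⁻¹' t, condDistrib Y Z μ (Z ω) u ∂μ).toReal
      = ∫ ω in W ⁻¹' B ∩ Z ⁻¹' t, gu ω ∂μ := by
    rw [← integral_toReal (hc_meas.aemeasurable.restrict)
      (Eventually.of_forall fun ω => lt_of_le_of_lt (hc_le_one ω) ENNReal.one_lt_top)]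
    exact setIntegral_congr_ae (hWB.inter hZt) (hc.mono fun ω h _ => h)
  -- the main real computation
  have h_sm : StronglyMeasurable[MeasurableSpace.comap Z inferInstance]
      ((Z ⁻¹' t).indicator gu) :=
    stronglyMeasurable_condExp.indicator hZt_m
  have h_bound : ∀ᵐ ω ∂μ, ‖(Z ⁻¹' t).indicator gu ω‖ ≤ 1 := by
    filter_upwards [hgu_nonneg, hgu_le_one] with ω h0 h1
    have h0' : (0:ℝ) ≤ gu ω := h0
    have h1' : gu ω ≤ 1 := h1
    by_cases hω : ω ∈ Z ⁻¹' t
    · rw [Set.indicator_of_mem hω, Real.norm_eq_abs, abs_le]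
      exact ⟨by linarith, h1'⟩
    · rw [Set.indicator_of_notMem hω]
      simp
  have hRHS_real : ∫ ω in W ⁻¹' B ∩ Z ⁻¹' t, gu ω ∂μ
      = ∫ ω in Z ⁻¹' t, gu ω * fB ω ∂μ := by
    have h1 : ∫ ω in W ⁻¹' B ∩ Z ⁻¹' t, gu ω ∂μ
        = ∫ ω in W ⁻¹' B, (Z ⁻¹' t).indicator gu ω ∂μ := by
      rw [setIntegral_indicator hZt]
    have h2 : ∫ ω in W ⁻¹' B, (Z ⁻¹' t).indicator gu ω ∂μ
        = ∫ ω, (Z ⁻¹' t).indicator gu ω * (W ⁻¹' B).indicator (fun _ => (1:ℝ)) ω ∂μ := by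
      rw [← integral_indicator hWB]
      congr 1
      ext ω
      by_cases hω : ω ∈ W ⁻¹' B <;> simp [Set.indicator_apply, hω]
    have h3 : ∫ ω, (Z ⁻¹' t).indicator gu ω * (W ⁻¹' B).indicator (fun _ => (1:ℝ)) ω ∂μ
        = ∫ ω, (Z ⁻¹' t).indicator gu ω * fB ω ∂μ := by
      rw [← integral_condExp hm (μ := μ)
          (f := fun ω => (Z ⁻¹' t).indicator gu ω * (W ⁻¹' B).indicator (fun _ => (1:ℝ)) ω)]
      have hmul := condExp_stronglyMeasurable_mul_of_bound hm h_sm (hind_int _ hWB) 1 h_bound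
      have hmul' : (μ[fun ω => (Z ⁻¹' t).indicator gu ω
            * (W ⁻¹' B).indicator (fun _ => (1:ℝ)) ω | MeasurableSpace.comap Z inferInstance])
          =ᵐ[μ] fun ω => (Z ⁻¹' t).indicator gu ω * fB ω := hmul
      rw [integral_congr_ae hmul']
    have h4 : ∫ ω, (Z ⁻¹' t).indicator gu ω * fB ω ∂μ
        = ∫ ω in Z ⁻¹' t, gu ω * fB ω ∂μ := by
      rw [← integral_indicator hZt]
      congr 1
      ext ω
      by_cases hω : ω ∈ Z ⁻¹' t <;> simp [Set.indicator_apply, hω]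
    rw [h1, h2, h3, h4]
  -- LHS
  have hLHS_toReal : (μ (W ⁻¹' B ∩ Z ⁻¹' t ∩ Y ⁻¹' u)).toReal
      = ∫ ω in Z ⁻¹' t, gu ω * fB ω ∂μ := by
    have hset : (Y ⁻¹' u ∩ W ⁻¹' B) ∩ Z ⁻¹' t = W ⁻¹' B ∩ Z ⁻¹' t ∩ Y ⁻¹' u := by
      ext ω; simp only [Set.mem_inter_iff]; tauto
    have h1 : ∫ ω in Z ⁻¹' t, (Y ⁻¹' u ∩ W ⁻¹' B).indicator (fun _ => (1:ℝ)) ω ∂μ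
        = (μ (W ⁻¹' B ∩ Z ⁻¹' t ∩ Y ⁻¹' u)).toReal := by
      rw [integral_indicator_const _ (hYu.inter hWB), measureReal_restrict_apply (hYu.inter hWB),
        smul_eq_mul, mul_one, hset, measureReal_def]
    have h2 : ∫ ω in Z ⁻¹' t, (Y ⁻¹' u ∩ W ⁻¹' B).indicator (fun _ => (1:ℝ)) ω ∂μ
        = ∫ ω in Z ⁻¹' t, (μ⟦Y ⁻¹' u ∩ W ⁻¹' B | MeasurableSpace.comap Z inferInstance⟧) ω ∂μ :=
      (setIntegral_condExp hm (hind_int _ (hYu.inter hWB)) hZt_m).symm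
    have h3 : ∫ ω in Z ⁻¹' t, (μ⟦Y ⁻¹' u ∩ W ⁻¹' B | MeasurableSpace.comap Z inferInstance⟧) ω ∂μ
        = ∫ ω in Z ⁻¹' t, gu ω * fB ω ∂μ :=
      setIntegral_congr_ae hZt (hCI'.mono fun ω h _ => h)
    rw [← h1, h2, h3]
  have hfin := hLHS_toReal.trans (hRHS_real.symm.trans hRHS_toReal.symm)
  exact (ENNReal.toReal_eq_toReal_iff' (measure_ne_top μ _) hRHS_ne_top).mp hfin

/-- If `Y ⊥ (W₁, W₂) ∣ Z`, then the conditional distribution of `Y` given `(W₁, W₂, Z)`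
coincides a.e. with the conditional distribution of `Y` given `Z`. -/
lemma condDistrib_triple_ae_eq (μ : Measure Ω) [IsProbabilityMeasure μ]
    (W₁ W₂ Y : Ω → ℝ) (Z : Ω → γ)
    (hW₁ : Measurable W₁) (hW₂ : Measurable W₂) (hY : Measurable Y) (hZ : Measurable Z)
    (hCI : CondIndepFun (MeasurableSpace.comap Z inferInstance) hZ.comap_le
      Y (fun ω => (W₁ ω, W₂ ω)) μ) :
    ∀ᵐ ω ∂μ, condDistrib Y (fun ω' => (W₁ ω', W₂ ω', Z ω')) μ (W₁ ω, W₂ ω, Z ω)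
      = condDistrib Y Z μ (Z ω) := by
  set T : Ω → ℝ × ℝ × γ := fun ω => (W₁ ω, W₂ ω, Z ω) with hT_def
  have hT : Measurable T := hW₁.prodMk (hW₂.prodMk hZ)
  set κ : Kernel (ℝ × ℝ × γ) ℝ :=
    (condDistrib Y Z μ).comap (fun p => p.2.2) measurable_snd.snd with hκ_def
  have hκ_apply : ∀ p, κ p = condDistrib Y Z μ p.2.2 := fun p => rfl
  haveI : IsMarkovKernel κ := by rw [hκ_def]; infer_instance
  -- Step (★): for measurable A, u
  have hstar : ∀ {A : Set (ℝ × ℝ × γ)} {u : Set ℝ}, MeasurableSet A → MeasurableSet u →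
      μ (T ⁻¹' A ∩ Y ⁻¹' u) = ∫⁻ ω in T ⁻¹' A, condDistrib Y Z μ (Z ω) u ∂μ := by
    intro A u hA hu
    have hc_meas : Measurable fun ω => condDistrib Y Z μ (Z ω) u :=
      (measurable_condDistrib (μ := μ) hu).mono hZ.comap_le le_rfl
    set ρ₁ : Measure (ℝ × ℝ × γ) := (μ.restrict (Y ⁻¹' u)).map T with hρ₁_def
    set ρ₂ : Measure (ℝ × ℝ × γ) :=
      (μ.withDensity fun ω => condDistrib Y Z μ (Z ω) u).map T with hρ₂_def
    have hρ₁_apply : ∀ {A' : Set (ℝ × ℝ × γ)}, MeasurableSet A' →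
        ρ₁ A' = μ (T ⁻¹' A' ∩ Y ⁻¹' u) := by
      intro A' hA'
      rw [hρ₁_def, Measure.map_apply hT hA', Measure.restrict_apply (hT hA')]
    have hρ₂_apply : ∀ {A' : Set (ℝ × ℝ × γ)}, MeasurableSet A' →
        ρ₂ A' = ∫⁻ ω in T ⁻¹' A', condDistrib Y Z μ (Z ω) u ∂μ := by
      intro A' hA'
      rw [hρ₂_def, Measure.map_apply hT hA', withDensity_apply _ (hT hA')]
    haveI : IsFiniteMeasure ρ₁ := by
      constructor
      rw [hρ₁_apply MeasurableSet.univ]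
      exact measure_lt_top _ _
    haveI : IsFiniteMeasure ρ₂ := by
      constructor
      rw [hρ₂_apply MeasurableSet.univ]
      refine lt_of_le_of_lt ((lintegral_mono fun ω => prob_le_one).trans ?_)
        (measure_lt_top μ (T ⁻¹' Set.univ))
      simp
    have hext : ρ₁ = ρ₂ := by
      refine ext_of_generate_finite
        (Set.image2 (· ×ˢ ·) {s : Set ℝ | MeasurableSet s}
          (Set.image2 (· ×ˢ ·) {r : Set ℝ | MeasurableSet r} {v : Set γ | MeasurableSet v}))
        ?_ ?_ ?_ ?_
      · exact (generateFrom_eq_prod MeasurableSpace.generateFrom_measurableSet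
          (generateFrom_eq_prod MeasurableSpace.generateFrom_measurableSet MeasurableSpace.generateFrom_measurableSet
            isCountablySpanning_measurableSet isCountablySpanning_measurableSet)
          isCountablySpanning_measurableSet
          (isCountablySpanning_measurableSet.prod isCountablySpanning_measurableSet)).symm
      · exact MeasurableSpace.isPiSystem_measurableSet.prod (MeasurableSpace.isPiSystem_measurableSet.prod
          MeasurableSpace.isPiSystem_measurableSet)
      · rintro _ ⟨s, hs, _, ⟨r, hr, v, hv, rfl⟩, rfl⟩
        simp only [Set.mem_setOf_eq] at hs hr hv
        have hA' : MeasurableSet (s ×ˢ r ×ˢ v) := hs.prod (hr.prod hv)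
        have hpre : T ⁻¹' (s ×ˢ r ×ˢ v)
            = (fun ω => (W₁ ω, W₂ ω)) ⁻¹' (s ×ˢ r) ∩ Z ⁻¹' v := by
          ext ω
          simp [hT_def, Set.mem_prod, and_assoc]
        rw [hρ₁_apply hA', hρ₂_apply hA', hpre]
        exact star2 μ (fun ω => (W₁ ω, W₂ ω)) Y Z (hW₁.prodMk hW₂) hY hZ hCI
          (hs.prod hr) hv hu
      · rw [hρ₁_apply MeasurableSet.univ, hρ₂_apply MeasurableSet.univ]
        have h := star2 μ (fun ω => (W₁ ω, W₂ ω)) Y Z (hW₁.prodMk hW₂) hY hZ hCI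
          (MeasurableSet.univ (α := ℝ × ℝ)) (MeasurableSet.univ (α := γ)) hu
        simpa using h
    calc μ (T ⁻¹' A ∩ Y ⁻¹' u) = ρ₁ A := (hρ₁_apply hA).symm
      _ = ρ₂ A := by rw [hext]
      _ = _ := hρ₂_apply hA
  -- Step: compProd equality
  have hcomp : μ.map (fun ω => (T ω, Y ω)) = μ.map T ⊗ₘ κ := by
    have hTY : Measurable fun ω => (T ω, Y ω) := hT.prodMk hY
    haveI : IsFiniteMeasure (μ.map fun ω => (T ω, Y ω)) := by
      constructor
      rw [Measure.map_apply hTY MeasurableSet.univ]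
      exact measure_lt_top _ _
    haveI : IsFiniteMeasure (μ.map T) := by
      constructor
      rw [Measure.map_apply hT MeasurableSet.univ]
      exact measure_lt_top _ _
    refine ext_of_generate_finite _ generateFrom_prod.symm isPiSystem_prod ?_ ?_
    · rintro _ ⟨A, hA, u, hu, rfl⟩
      simp only [Set.mem_setOf_eq] at hA hu
      rw [Measure.map_apply hTY (hA.prod hu), Measure.compProd_apply_prod hA hu]
      have h1 : (fun ω => (T ω, Y ω)) ⁻¹' (A ×ˢ u) = T ⁻¹' A ∩ Y ⁻¹' u :=
        Set.mk_preimage_prod _ _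
      have h2 : ∫⁻ p in A, κ p u ∂(μ.map T)
          = ∫⁻ ω in T ⁻¹' A, condDistrib Y Z μ (Z ω) u ∂μ := by
        simp_rw [hκ_apply]
        exact setLIntegral_map hA
          ((Kernel.measurable_coe (condDistrib Y Z μ) hu).comp measurable_snd.snd) hT
      rw [h1, h2, hstar hA hu]
    · rw [Measure.map_apply hTY MeasurableSet.univ]
      simp [Measure.map_apply hT MeasurableSet.univ]
  have h := condDistrib_ae_eq_of_measure_eq_compProd_of_measurable hT hY (κ := κ) hcomp
  have h' := ae_of_ae_map hT.aemeasurable h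
  filter_upwards [h'] with ω hω
  exact hω.trans (hκ_apply _)

end Aux

/-- If `Y ⊥ (X, X̃) ∣ Z` and `X, X̃` are conditionally i.i.d. given `Z`,
then the conditional distribution of `Y` given `(X, X̃, Z)` equals that of `Y` given
`(X̃, X, Z)`, almost surely. -/
theorem cond_law_swap_invariant
    {Ω : Type*} {mΩ : MeasurableSpace Ω} [StandardBorelSpace Ω] [Nonempty Ω]
    {γ : Type*} [MeasurableSpace γ] [StandardBorelSpace γ] [Nonempty γ]
    (μ : Measure Ω) [IsProbabilityMeasure μ]
    (X Xt Y : Ω → ℝ) (Z : Ω → γ)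
    (hX : Measurable X) (hXt : Measurable Xt) (hY : Measurable Y) (hZ : Measurable Z)
    -- Y ⊥ (X, X̃) ∣ Z
    (hCI : CondIndepFun (MeasurableSpace.comap Z inferInstance) hZ.comap_le
      Y (fun ω => (X ω, Xt ω)) μ)
    -- X and X̃ are conditionally independent given Z ...
    (hXXt : CondIndepFun (MeasurableSpace.comap Z inferInstance) hZ.comap_le X Xt μ)
    -- ... with the same conditional law given Z (conditionally i.i.d.)
    (hLaw : ∀ᵐ z ∂(μ.map Z), condDistrib Xt Z μ z = condDistrib X Z μ z) :
    ∀ᵐ ω ∂μ,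
      condDistrib Y (fun ω' => (X ω', Xt ω', Z ω')) μ (X ω, Xt ω, Z ω)
        = condDistrib Y (fun ω' => (Xt ω', X ω', Z ω')) μ (Xt ω, X ω, Z ω) := by
  have hCI' : CondIndepFun (MeasurableSpace.comap Z inferInstance) hZ.comap_le
      Y (fun ω => (Xt ω, X ω)) μ :=
    hCI.comp measurable_id measurable_swap
  have h1 := condDistrib_triple_ae_eq μ X Xt Y Z hX hXt hY hZ hCI
  have h2 := condDistrib_triple_ae_eq μ Xt X Y Z hXt hX hY hZ hCI'
  filter_upwards [h1, h2] with ω hω1 hω2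
  rw [hω1, hω2]
end

section
/- Let (W_t)_{t≥1} be [−1,1]-valued with lim inf_{t→∞} (1/t) Σ_{s=1}^t W_s > 0 almost surely. Let h be a probability density on [0,1] that is strictly positive on an interval (0, ε) for some ε > 0. Then the mixture martingale S_t = ∫_0^1 ∏_{j=1}^t (1 + v·W_j) h(v) dv satisfies, for every α ∈ (0,1), P(∃t: S_t ≥ 1/α) = 1. -/
open MeasureTheory Filter
open scoped ENNReal

lemma exp_aux (x : ℝ) (h1 : -(1/2) ≤ x) (h2 : x ≤ 1/2) :
    Real.exp (x - 2*x^2) ≤ 1 + x := by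
  have hpos : 0 < 1 - x + 2*x^2 := by nlinarith [sq_nonneg (2*x - 1)]
  have he : 1 - x + 2*x^2 ≤ Real.exp (2*x^2 - x) := by
    nlinarith [Real.add_one_le_exp (2*x^2 - x)]
  have h3 : Real.exp (x - 2*x^2) * (1 - x + 2*x^2) ≤ 1 := by
    calc Real.exp (x - 2*x^2) * (1 - x + 2*x^2)
        ≤ Real.exp (x - 2*x^2) * Real.exp (2*x^2 - x) :=
          mul_le_mul_of_nonneg_left he (Real.exp_pos _).le
      _ = 1 := by rw [← Real.exp_add]; ring_nf; exact Real.exp_zero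
  have h4 : 1 ≤ (1 + x) * (1 - x + 2*x^2) := by nlinarith [sq_nonneg x]
  exact le_of_mul_le_mul_right (h3.trans h4) hpos

set_option maxHeartbeats 1000000 in
/-- power one: if the running averages of the `[-1,1]`-valued betting
scores have a.s. strictly positive liminf and the mixing density `h` is strictly
positive near 0, then the mixture martingale crosses `1/α` with probability one,
for every `α ∈ (0,1)`. -/
theorem mixture_martingale_power_one
    {Ω : Type*} {mΩ : MeasurableSpace Ω}
    (μ : Measure Ω) [IsProbabilityMeasure μ]
    (W : ℕ → Ω → ℝ) (hmeas : ∀ t, Measurable (W t))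
    (hbdd : ∀ t ω, W t ω ∈ Set.Icc (-1 : ℝ) 1)
    (hliminf : ∀ᵐ ω ∂μ,
      0 < atTop.liminf (fun t : ℕ => (t : ℝ)⁻¹ * ∑ s ∈ Finset.range t, W (s + 1) ω))
    (h : ℝ → ℝ) (hmeas_h : Measurable h) (hnn : ∀ v, 0 ≤ h v)
    (hdens : ∫ v in Set.Icc (0 : ℝ) 1, h v = 1)
    (ε : ℝ) (hε : 0 < ε)
    (hpos : ∀ v ∈ Set.Ioo (0 : ℝ) ε, 0 < h v) :
    ∀ α : ℝ, α ∈ Set.Ioo (0 : ℝ) 1 →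
      μ {ω | ∃ t : ℕ, 1 / α ≤ ∫ v in Set.Icc (0 : ℝ) 1,
          (∏ j ∈ Finset.range t, (1 + v * W (j + 1) ω)) * h v} = 1 := by
  have hInt : IntegrableOn h (Set.Icc (0:ℝ) 1) := by
    by_contra hc
    rw [MeasureTheory.integral_undef hc] at hdens
    norm_num at hdens
  intro α hα
  have hae : ∀ᵐ ω ∂μ, ∃ t : ℕ, 1 / α ≤ ∫ v in Set.Icc (0 : ℝ) 1,
      (∏ j ∈ Finset.range t, (1 + v * W (j + 1) ω)) * h v := by
    filter_upwards [hliminf] with ω hL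
    set A : ℕ → ℝ := fun t => (t : ℝ)⁻¹ * ∑ s ∈ Finset.range t, W (s + 1) ω with hAdef
    -- A is bounded below
    have hAbd : ∀ t, (-1 : ℝ) ≤ A t := by
      intro t
      show (-1 : ℝ) ≤ (t : ℝ)⁻¹ * ∑ s ∈ Finset.range t, W (s + 1) ω
      rcases Nat.eq_zero_or_pos t with ht | ht
      · simp [ht]
      have htpos : (0:ℝ) < t := by exact_mod_cast ht
      have hsum : -(t:ℝ) ≤ ∑ s ∈ Finset.range t, W (s + 1) ω := by
        have : ∑ s ∈ Finset.range t, (-1 : ℝ) ≤ ∑ s ∈ Finset.range t, W (s + 1) ω :=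
          Finset.sum_le_sum fun s _ => (hbdd (s+1) ω).1
        simpa using this
      have hinv : (0:ℝ) ≤ (t:ℝ)⁻¹ := by positivity
      calc (-1 : ℝ) = (t:ℝ)⁻¹ * (-(t:ℝ)) := by field_simp
        _ ≤ (t:ℝ)⁻¹ * ∑ s ∈ Finset.range t, W (s + 1) ω :=
            mul_le_mul_of_nonneg_left hsum hinv
    have hbddA : atTop.IsBoundedUnder (· ≥ ·) A :=
      Filter.isBoundedUnder_of ⟨-1, hAbd⟩
    set L := atTop.liminf A with hLdef
    have hc0 : 0 < L / 2 := by positivity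
    have hev : ∀ᶠ t in atTop, L / 2 < A t :=
      eventually_lt_of_lt_liminf (by linarith) hbddA
    set c : ℝ := L / 2 with hcdef
    set b : ℝ := min (c/4) (min (ε/2) (1/2)) with hbdef
    set a : ℝ := b / 2 with hadef
    have hb0 : 0 < b := lt_min (by linarith) (lt_min (by linarith) one_half_pos)
    have ha0 : 0 < a := by positivity
    have hab : a < b := by rw [hadef]; linarith
    have hb_half : b ≤ 1/2 := (min_le_right _ _).trans (min_le_right _ _)
    have hb_eps : b < ε := lt_of_le_of_lt ((min_le_right _ _).trans (min_le_left _ _)) (by linarith)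
    have hbc : 2 * b ≤ c / 2 := by
      have := min_le_left (c/4) (min (ε/2) (1/2))
      linarith
    have hsub01 : Set.Icc a b ⊆ Set.Icc (0:ℝ) 1 :=
      Set.Icc_subset_Icc (le_of_lt ha0) (by linarith)
    -- positivity of the mass of h on [a,b]
    have hIntab : IntegrableOn h (Set.Icc a b) := hInt.mono_set hsub01
    set M : ℝ := ∫ v in Set.Icc a b, h v with hMdef
    have hM : 0 < M := by
      rw [hMdef]
      rw [setIntegral_pos_iff_support_of_nonneg_ae
        (Filter.Eventually.of_forall fun v => hnn v) hIntab]
      have hsubsup : Set.Icc a b ⊆ Function.support h ∩ Set.Icc a b := by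
        intro v hv
        refine ⟨?_, hv⟩
        have : 0 < h v := hpos v ⟨lt_of_lt_of_le ha0 hv.1, lt_of_le_of_lt hv.2 hb_eps⟩
        exact ne_of_gt this
      calc (0 : ℝ≥0∞) < volume (Set.Icc a b) := by
            rw [Real.volume_Icc]; exact ENNReal.ofReal_pos.mpr (by linarith)
        _ ≤ volume (Function.support h ∩ Set.Icc a b) := measure_mono hsubsup
    set K : ℝ := a * (c - 2*b) with hKdef
    have hK : 0 < K := by
      apply mul_pos ha0; linarith
    clear_value A L c b a M K
    -- the lower bound tends to infinity
    have htend : Tendsto (fun t : ℕ => Real.exp ((t : ℝ) * K) * M) atTop atTop := by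
      apply Tendsto.atTop_mul_const hM
      exact Real.tendsto_exp_atTop.comp (Tendsto.atTop_mul_const hK tendsto_natCast_atTop_atTop)
    obtain ⟨t, ⟨ht_avg, ht_big⟩, ht1⟩ :=
      ((hev.and (htend.eventually_ge_atTop (1/α))).and (eventually_ge_atTop 1)).exists
    refine ⟨t, ?_⟩
    have htpos : (0:ℝ) < t := by exact_mod_cast ht1
    have htR1 : (1:ℝ) ≤ t := by exact_mod_cast ht1
    -- sum lower bound
    have hSw : c * t ≤ ∑ s ∈ Finset.range t, W (s + 1) ω := by
      have h1 : c * t < A t * t := mul_lt_mul_of_pos_right ht_avg htpos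
      have h2 : A t * t = ∑ s ∈ Finset.range t, W (s + 1) ω := by
        rw [hAdef]
        field_simp
      linarith [h1.le.trans h2.le]
    -- pointwise product lower bound on [a,b]
    have hpoint : ∀ v ∈ Set.Icc a b,
        Real.exp ((t : ℝ) * K) ≤ ∏ j ∈ Finset.range t, (1 + v * W (j + 1) ω) := by
      intro v hv
      have hva : a ≤ v := hv.1
      have hvb : v ≤ b := hv.2
      have hv0 : 0 < v := lt_of_lt_of_le ha0 hva
      have hfac : ∀ j ∈ Finset.range t,
          Real.exp (v * W (j + 1) ω - 2*v^2) ≤ 1 + v * W (j + 1) ω := by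
        intro j _
        have hW := hbdd (j+1) ω
        have hW1 : -1 ≤ W (j+1) ω := hW.1
        have hW2 : W (j+1) ω ≤ 1 := hW.2
        have hx1 : -(1/2) ≤ v * W (j+1) ω := by nlinarith
        have hx2 : v * W (j+1) ω ≤ 1/2 := by nlinarith
        refine le_trans ?_ (exp_aux (v * W (j+1) ω) hx1 hx2)
        apply Real.exp_le_exp.mpr
        have hWsq : 0 ≤ (1 - W (j+1) ω) * (1 + W (j+1) ω) := by nlinarith
        nlinarith [sq_nonneg v, mul_nonneg (sq_nonneg v) hWsq]
      calc Real.exp ((t : ℝ) * K)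
          ≤ Real.exp (∑ j ∈ Finset.range t, (v * W (j + 1) ω - 2*v^2)) := by
            apply Real.exp_le_exp.mpr
            rw [Finset.sum_sub_distrib, ← Finset.mul_sum, Finset.sum_const,
              Finset.card_range, nsmul_eq_mul]
            have hv1 : v * (c * t) ≤ v * (∑ s ∈ Finset.range t, W (s + 1) ω) :=
              mul_le_mul_of_nonneg_left hSw hv0.le
            have h2v : 0 ≤ c - 2*v := by linarith
            rw [hKdef]
            have h5 : 0 ≤ (v - a) * (c - 2*b) :=
              mul_nonneg (sub_nonneg.mpr hva) (by linarith)
            have h6 : 0 ≤ v * (b - v) := mul_nonneg hv0.le (sub_nonneg.mpr hvb)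
            nlinarith [hv1, mul_nonneg htpos.le h5, mul_nonneg htpos.le h6]
        _ = ∏ j ∈ Finset.range t, Real.exp (v * W (j + 1) ω - 2*v^2) :=
            Real.exp_sum _ _
        _ ≤ ∏ j ∈ Finset.range t, (1 + v * W (j + 1) ω) :=
            Finset.prod_le_prod (fun j _ => (Real.exp_pos _).le) hfac
    -- integrability of the integrand on [0,1]
    set f : ℝ → ℝ := fun v => (∏ j ∈ Finset.range t, (1 + v * W (j + 1) ω)) * h v with hfdef
    have hcont : Continuous fun v : ℝ => ∏ j ∈ Finset.range t, (1 + v * W (j + 1) ω) := by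
      apply continuous_finset_prod
      intro j _
      exact continuous_const.add (continuous_id.mul continuous_const)
    have hprod_nn : ∀ v ∈ Set.Icc (0:ℝ) 1,
        0 ≤ ∏ j ∈ Finset.range t, (1 + v * W (j + 1) ω) := by
      intro v hv
      apply Finset.prod_nonneg
      intro j _
      have hW := hbdd (j+1) ω
      nlinarith [hW.1, hW.2, hv.1, hv.2]
    have hIf : IntegrableOn f (Set.Icc (0:ℝ) 1) := by
      apply Integrable.bdd_mul (c := (2:ℝ)^t) hInt
        (hcont.aestronglyMeasurable.restrict)
      rw [ae_restrict_iff' measurableSet_Icc]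
      apply Filter.Eventually.of_forall
      intro v hv
      rw [Real.norm_eq_abs, abs_of_nonneg (hprod_nn v hv)]
      calc ∏ j ∈ Finset.range t, (1 + v * W (j + 1) ω)
          ≤ ∏ j ∈ Finset.range t, (2:ℝ) := by
            apply Finset.prod_le_prod
            · intro j _
              have hW := hbdd (j+1) ω
              nlinarith [hW.1, hW.2, hv.1, hv.2]
            · intro j _
              have hW := hbdd (j+1) ω
              nlinarith [hW.1, hW.2, hv.1, hv.2]
        _ = (2:ℝ)^t := by rw [Finset.prod_const, Finset.card_range]
    have hf_nn : 0 ≤ᵐ[volume.restrict (Set.Icc (0:ℝ) 1)] f := by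
      filter_upwards [ae_restrict_mem measurableSet_Icc] with v hv
      exact mul_nonneg (hprod_nn v hv) (hnn v)
    -- chain of inequalities
    have step1 : ∫ v in Set.Icc a b, f v ≤ ∫ v in Set.Icc (0:ℝ) 1, f v :=
      setIntegral_mono_set hIf hf_nn (HasSubset.Subset.eventuallyLE hsub01)
    have step2 : Real.exp ((t : ℝ) * K) * M ≤ ∫ v in Set.Icc a b, f v := by
      have heq : Real.exp ((t : ℝ) * K) * M
          = ∫ v in Set.Icc a b, Real.exp ((t : ℝ) * K) * h v := by
        rw [MeasureTheory.integral_const_mul, hMdef]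
      rw [heq]
      apply setIntegral_mono_on
      · exact (hIntab.const_mul _)
      · exact hIf.mono_set hsub01
      · exact measurableSet_Icc
      · intro v hv
        exact mul_le_mul_of_nonneg_right (hpoint v hv) (hnn v)
    calc 1 / α ≤ Real.exp ((t : ℝ) * K) * M := ht_big
      _ ≤ ∫ v in Set.Icc a b, f v := step2
      _ ≤ ∫ v in Set.Icc (0:ℝ) 1, f v := step1
  -- convert a.e. statement to measure-one statement
  set s := {ω | ∃ t : ℕ, 1 / α ≤ ∫ v in Set.Icc (0 : ℝ) 1,
      (∏ j ∈ Finset.range t, (1 + v * W (j + 1) ω)) * h v} with hsdef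
  have h0 : μ sᶜ = 0 := by
    rw [ae_iff] at hae
    exact hae
  have h1 : μ s ≤ 1 := prob_le_one
  have h2 : (1 : ℝ≥0∞) ≤ μ s := by
    calc (1 : ℝ≥0∞) = μ Set.univ := (measure_univ).symm
      _ = μ (s ∪ sᶜ) := by rw [Set.union_compl_self]
      _ ≤ μ s + μ sᶜ := measure_union_le _ _
      _ = μ s := by rw [h0, add_zero]
  exact le_antisymm h1 h2
end
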